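/- For n ≥ 3, let L = ⌊log n⌋ and let A_n = {τ ∈ S_n : τ(i) < τ(n) for all 1 ≤ i ≤ L}. Then P(π_n ∈ A_n) = 1/(L+1), where π_n is a uniformly distributed random permutation of S_n, and P(ρ_n ∈ A_n) = n / ( n + L(L+1)/2 ). In particular, P(ρ_n ∈ A_n) − P(π_n ∈ A_n) → 1 as n → ∞. -/

import Mathlib

/-!
Under the uniform measure, right multiplication by the transposition `(b n)` shows that the
maximum of `τ` on `{1, …, L, n}` is equally likely to sit at each of these `L + 1` points.

For `ρ_n`, the event says `max_{i ≤ L} Z_i < Z_n`. The maximum of the independent `Z_1, …, Z_L`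
has distribution function `t ^ (1 + ⋯ + L) = t ^ (L(L+1)/2)` and is independent of `Z_n`, whose
distribution function is `t ^ n`. If `X, Y` are independent with distribution functions `t ^ a`,
`t ^ b`, then `X` has the law of `U ^ (1/a)` with `U` uniform, so
`P(X < Y) = ∫₀¹ (1 - u ^ (b/a)) du = b / (a + b)`. Since `L(L+1)/2 = O(log² n) = o(n)`, the first
probability tends to `1` and the second to `0`.
-/

open MeasureTheory ProbabilityTheory Filter
open scoped ENNReal NNReal Topology

/-- The hypotheses defining an inverse-unfair permutation `ρ` on a probability
space `(Ω, μ)`: `Z i` is (distributed as) the maximum of `i+1` i.i.d. uniform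
random variables on `(0,1)` (players are indexed by `Fin n`, player `i : Fin n`
drawing `(i : ℕ) + 1` numbers), the `Z i` are independent, and almost surely
`ρ ω` is the rank permutation of `(Z 0 ω, …, Z (n-1) ω)`. -/
structure IsInverseUnfair {n : ℕ} {Ω : Type*} [MeasurableSpace Ω]
    (μ : Measure Ω) (Z : Fin n → Ω → ℝ) (ρ : Ω → Equiv.Perm (Fin n)) : Prop where
  prob : IsProbabilityMeasure μ
  meas : ∀ i, Measurable (Z i)
  indep : iIndepFun (m := fun _ : Fin n => (inferInstance : MeasurableSpace ℝ)) Z μ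
  cdf : ∀ i : Fin n, ∀ t ∈ Set.Icc (0 : ℝ) 1,
      μ {ω | Z i ω ≤ t} = ENNReal.ofReal (t ^ ((i : ℕ) + 1))
  rhoMeas : ∀ σ : Equiv.Perm (Fin n), MeasurableSet {ω | ρ ω = σ}
  rank : ∀ᵐ ω ∂μ, ∀ i j : Fin n, (ρ ω i < ρ ω j ↔ Z i ω < Z j ω)

/-- The event `A_n = {τ : τ(i) < τ(n) for all 1 ≤ i ≤ ⌊log n⌋}`, in 0-indexed
form: all positions `i` with `(i : ℕ) + 1 ≤ ⌊log n⌋` map below the image of the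
last position. -/
def inEventA (n : ℕ) (τ : Equiv.Perm (Fin n)) : Prop :=
  ∀ i : Fin n, (i : ℕ) + 1 ≤ ⌊Real.log n⌋₊ →
    ∀ j : Fin n, (j : ℕ) = n - 1 → τ i < τ j

noncomputable instance (n : ℕ) : DecidablePred (inEventA n) := fun _ => by
  unfold inEventA; infer_instance

section Perm

open Finset

variable {α : Type*} [Fintype α] [LinearOrder α]

theorem card_perm_forall_le_eq (T : Finset α) {a b : α} (ha : a ∈ T) (hb : b ∈ T) :
    #{σ : Equiv.Perm α | ∀ i ∈ T, σ i ≤ σ a} = #{σ : Equiv.Perm α | ∀ i ∈ T, σ i ≤ σ b} := by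
  have hswap : ∀ i, Equiv.swap a b i ∈ T ↔ i ∈ T := by
    intro i
    rcases eq_or_ne i a with rfl | hia
    · simp [ha, hb]
    rcases eq_or_ne i b with rfl | hib
    · simp [ha, hb]
    · rw [Equiv.swap_apply_of_ne_of_ne hia hib]
  refine card_equiv (Equiv.mulRight (Equiv.swap a b)) fun σ => ?_
  simp only [mem_filter, mem_univ, true_and, Equiv.coe_mulRight, Equiv.Perm.coe_mul,
    Function.comp_apply, Equiv.swap_apply_right]
  refine ⟨fun h i hi => h _ ((hswap i).2 hi), fun h j hj => ?_⟩
  simpa using h (Equiv.swap a b j) ((hswap _).2 (by simpa using hj))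

theorem card_perm_forall_le_mul_card (T : Finset α) {a : α} (ha : a ∈ T) :
    #{σ : Equiv.Perm α | ∀ i ∈ T, σ i ≤ σ a} * #T = (Fintype.card α).factorial := by
  set E : α → Finset (Equiv.Perm α) := fun b => {σ | ∀ i ∈ T, σ i ≤ σ b}
  have hcover : univ = T.biUnion E := by
    ext σ
    simpa [E] using T.exists_max_image σ ⟨a, ha⟩
  have hdisj : (T : Set α).PairwiseDisjoint E := by
    intro b hb c hc hbc
    simp only [Function.onFun, disjoint_left, E, mem_filter, mem_univ, true_and]
    exact fun σ hσb hσc => hbc (σ.injective (le_antisymm (hσc b hb) (hσb c hc)))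
  calc #(E a) * #T = ∑ b ∈ T, #(E b) := by
        rw [sum_congr rfl fun b hb => card_perm_forall_le_eq T hb ha, sum_const, smul_eq_mul,
          mul_comm]
    _ = #(T.biUnion E) := (card_biUnion hdisj).symm
    _ = (Fintype.card α).factorial := by rw [← hcover, card_univ, Fintype.card_perm]

theorem card_perm_forall_lt_mul (S : Finset α) {a : α} (ha : a ∉ S) :
    #{σ : Equiv.Perm α | ∀ i ∈ S, σ i < σ a} * (#S + 1) = (Fintype.card α).factorial := by
  rw [← card_insert_of_notMem ha, ← card_perm_forall_le_mul_card _ (mem_insert_self a S)]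
  congr 3
  ext σ
  simp only [mem_insert, forall_eq_or_imp, le_refl, true_and]
  exact forall₂_congr fun i hi => (σ.injective.ne (ne_of_mem_of_not_mem hi ha)).le_iff_lt.symm

end Perm

open Set

theorem eq_map_rpow_inv_of_measure_Iic_eq_pow {a : ℕ} (ha : a ≠ 0) (ν : Measure ℝ)
    [IsProbabilityMeasure ν] (hν : ∀ t ∈ Icc (0 : ℝ) 1, ν (Iic t) = ENNReal.ofReal (t ^ a)) :
    ν = (volume.restrict (Ioc (0 : ℝ) 1)).map fun u => u ^ (a : ℝ)⁻¹ := by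
  refine Measure.ext_of_Iic _ _ fun t => ?_
  rw [Measure.map_apply (by fun_prop) measurableSet_Iic,
    Measure.restrict_apply' measurableSet_Ioc]
  rcases lt_or_ge t 0 with ht0 | ht0
  · have hν0 : ν (Iic t) = 0 :=
      measure_mono_null (Iic_subset_Iic.2 ht0.le) (by simpa [ha] using hν 0 (by simp))
    have hempty : (fun u : ℝ => u ^ (a : ℝ)⁻¹) ⁻¹' Iic t ∩ Ioc 0 1 = ∅ := by
      ext u
      simp only [mem_inter_iff, mem_preimage, mem_Iic, mem_Ioc, mem_empty_iff_false, iff_false]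
      exact fun ⟨hut, hu0, _⟩ => (Real.rpow_pos_of_pos hu0 _).not_ge (hut.trans ht0.le)
    rw [hν0, hempty, measure_empty]
  rcases le_or_gt t 1 with ht1 | ht1
  · have hset : (fun u : ℝ => u ^ (a : ℝ)⁻¹) ⁻¹' Iic t ∩ Ioc 0 1 = Ioc 0 (t ^ a) := by
      ext u
      simp only [mem_inter_iff, mem_preimage, mem_Iic, mem_Ioc]
      constructor
      · rintro ⟨hut, hu0, -⟩
        exact ⟨hu0, by rwa [Real.rpow_inv_le_iff_of_pos hu0.le ht0 (by positivity),
          Real.rpow_natCast] at hut⟩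
      · rintro ⟨hu0, hut⟩
        refine ⟨?_, hu0, hut.trans (pow_le_one₀ ht0 ht1)⟩
        rwa [Real.rpow_inv_le_iff_of_pos hu0.le ht0 (by positivity), Real.rpow_natCast]
    rw [hν t ⟨ht0, ht1⟩, hset, Real.volume_Ioc, sub_zero]
  · have hν1 : ν (Iic t) = 1 := by
      refine le_antisymm prob_le_one ?_
      calc 1 = ν (Iic 1) := by simpa using (hν 1 (by simp)).symm
        _ ≤ ν (Iic t) := measure_mono (Iic_subset_Iic.2 ht1.le)
    have hset : (fun u : ℝ => u ^ (a : ℝ)⁻¹) ⁻¹' Iic t ∩ Ioc 0 1 = Ioc 0 1 :=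
      inter_eq_self_of_subset_right fun u hu =>
        (Real.rpow_le_one hu.1.le hu.2 (by positivity)).trans ht1.le
    rw [hν1, hset, Real.volume_Ioc, sub_zero, ENNReal.ofReal_one]

theorem lintegral_Ioc_ofReal_one_sub_rpow {c : ℝ} (hc : 0 ≤ c) :
    ∫⁻ u in Ioc (0 : ℝ) 1, ENNReal.ofReal (1 - u ^ c) = ENNReal.ofReal (c / (c + 1)) := by
  have hint : IntervalIntegrable (fun u : ℝ => u ^ c) volume 0 1 :=
    intervalIntegral.intervalIntegrable_rpow' (by linarith)
  rw [← ofReal_integral_eq_lintegral_ofReal]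
  · rw [← intervalIntegral.integral_of_le zero_le_one,
      intervalIntegral.integral_sub intervalIntegrable_const hint,
      integral_rpow (Or.inl (by linarith)), intervalIntegral.integral_const]
    congr 1
    rw [Real.one_rpow, Real.zero_rpow (by positivity)]
    field_simp
    ring
  · exact (integrableOn_const measure_Ioc_lt_top.ne).sub
      ((intervalIntegrable_iff_integrableOn_Ioc_of_le zero_le_one).1 hint)
  · filter_upwards [ae_restrict_mem measurableSet_Ioc] with u hu
    simpa using Real.rpow_le_one hu.1.le hu.2 hc

theorem measure_lt_eq_of_cdf_pow {Ω : Type*} [MeasurableSpace Ω] {μ : Measure Ω}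
    [IsProbabilityMeasure μ] {X Y : Ω → ℝ} (hX : Measurable X) (hY : Measurable Y)
    (hXY : IndepFun X Y μ) {a b : ℕ} (ha : a ≠ 0)
    (hFX : ∀ t ∈ Icc (0 : ℝ) 1, μ {ω | X ω ≤ t} = ENNReal.ofReal (t ^ a))
    (hFY : ∀ t ∈ Icc (0 : ℝ) 1, μ {ω | Y ω ≤ t} = ENNReal.ofReal (t ^ b)) :
    μ {ω | X ω < Y ω} = ENNReal.ofReal (b / (a + b)) := by
  have := Measure.isProbabilityMeasure_map (μ := μ) hX.aemeasurable
  have := Measure.isProbabilityMeasure_map (μ := μ) hY.aemeasurable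
  have hlawX := eq_map_rpow_inv_of_measure_Iic_eq_pow ha (μ.map X) fun t ht => by
    rw [Measure.map_apply hX measurableSet_Iic]; exact hFX t ht
  have hYIoi : ∀ x ∈ Icc (0 : ℝ) 1, μ.map Y (Ioi x) = ENNReal.ofReal (1 - x ^ b) := by
    intro x hx
    rw [← compl_Iic, prob_compl_eq_one_sub measurableSet_Iic,
      Measure.map_apply hY measurableSet_Iic, ENNReal.ofReal_sub _ (by positivity [hx.1]),
      ENNReal.ofReal_one]
    exact congrArg _ (hFY x hx)
  have hYIoi_meas : Measurable fun x => μ.map Y (Ioi x) :=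
    Antitone.measurable fun x y hxy => measure_mono (Ioi_subset_Ioi hxy)
  have hlt : MeasurableSet {p : ℝ × ℝ | p.1 < p.2} :=
    measurableSet_lt measurable_fst measurable_snd
  calc μ {ω | X ω < Y ω} = ((μ.map X).prod (μ.map Y)) {p : ℝ × ℝ | p.1 < p.2} := by
        rw [← (indepFun_iff_map_prod_eq_prod_map_map hX.aemeasurable hY.aemeasurable).1 hXY,
          Measure.map_apply (hX.prodMk hY) hlt]
        rfl
    _ = ∫⁻ x, μ.map Y (Ioi x) ∂μ.map X := Measure.prod_apply hlt
    _ = ∫⁻ u in Ioc (0 : ℝ) 1, μ.map Y (Ioi (u ^ (a : ℝ)⁻¹)) := by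
        rw [hlawX, lintegral_map hYIoi_meas (by fun_prop)]
    _ = ∫⁻ u in Ioc (0 : ℝ) 1, ENNReal.ofReal (1 - u ^ ((b : ℝ) / a)) := by
        refine setLIntegral_congr_fun measurableSet_Ioc fun u hu => ?_
        rw [hYIoi _ ⟨by positivity [hu.1.le], Real.rpow_le_one hu.1.le hu.2 (by positivity)⟩,
          ← Real.rpow_natCast, ← Real.rpow_mul hu.1.le, inv_mul_eq_div]
    _ = ENNReal.ofReal (b / (a + b)) := by
        rw [lintegral_Ioc_ofReal_one_sub_rpow (by positivity)]
        congr 1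
        field_simp
        ring

section Sup

variable {Ω ι β : Type*} [MeasurableSpace Ω] {μ : Measure Ω} [MeasurableSpace β] {f : ι → Ω → β}

theorem ProbabilityTheory.iIndepFun.indepFun_finsetSup'_of_notMem [SemilatticeSup β]
    [MeasurableSup₂ β] (hf : iIndepFun f μ) (hmeas : ∀ i, Measurable (f i)) {s : Finset ι}
    (hs : s.Nonempty) {i : ι} (hi : i ∉ s) : IndepFun (s.sup' hs f) (f i) μ := by
  have h_left : s.sup' hs f =
      (fun p : s → β => s.attach.sup' hs.attach fun j => p j) ∘ fun ω (j : s) => f j ω := by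
    ext ω
    simp only [Finset.sup'_apply, Function.comp_apply]
    exact le_antisymm
      (Finset.sup'_le _ _ fun j hj => Finset.le_sup'_of_le _ (Finset.mem_attach _ ⟨j, hj⟩) le_rfl)
      (Finset.sup'_le _ _ fun j _ => Finset.le_sup' (fun j => f j ω) j.2)
  have h_meas_left : Measurable fun p : s → β => s.attach.sup' hs.attach fun j => p j := by
    have h := Finset.measurable_sup' hs.attach fun (j : s) _ =>
      (measurable_pi_apply j : Measurable fun p : s → β => p j)
    rwa [funext fun p => Finset.sup'_apply hs.attach (fun (j : s) (p : s → β) => p j) p] at h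
  have h_right : f i =
      (fun p : ({i} : Finset ι) → β => p ⟨i, Finset.mem_singleton_self i⟩) ∘
        fun ω (j : ({i} : Finset ι)) => f j ω := rfl
  rw [h_left, h_right]
  exact (hf.indepFun_finset s {i} (Finset.disjoint_singleton_right.2 hi) hmeas).comp
    h_meas_left (measurable_pi_apply _)

theorem ProbabilityTheory.iIndepFun.measure_finsetSup'_le [SemilatticeSup β]
    [TopologicalSpace β] [ClosedIicTopology β] [OpensMeasurableSpace β]
    (hf : iIndepFun f μ) {s : Finset ι} (hs : s.Nonempty) (t : β) :
    μ {ω | s.sup' hs f ω ≤ t} = ∏ i ∈ s, μ {ω | f i ω ≤ t} := by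
  have hset : {ω | s.sup' hs f ω ≤ t} = ⋂ i ∈ s, f i ⁻¹' Iic t := by
    ext ω
    simp [Finset.sup'_apply, Finset.sup'_le_iff]
  rw [hset, hf.measure_inter_preimage_eq_mul s (sets := fun _ => Iic t)
    fun _ _ => measurableSet_Iic]
  rfl

end Sup

theorem one_le_floor_log_natCast {n : ℕ} (hn : 3 ≤ n) : 1 ≤ ⌊Real.log n⌋₊ := by
  refine Nat.le_floor ?_
  rw [Nat.cast_one, Real.le_log_iff_exp_le (by positivity)]
  have h3 : (3 : ℝ) ≤ n := by exact_mod_cast hn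
  linarith [Real.exp_one_lt_d9]

theorem floor_log_natCast_lt {n : ℕ} (hn : n ≠ 0) : ⌊Real.log n⌋₊ < n :=
  (Nat.floor_lt' hn).2 <| by
    linarith [Real.log_le_sub_one_of_pos (Nat.cast_pos.2 (Nat.pos_of_ne_zero hn))]

theorem Fin.sum_filter_val_lt_add_one_mul_two {n L : ℕ} (hL : L ≤ n) :
    (∑ i ∈ ({i : Fin n | (i : ℕ) < L} : Finset (Fin n)), ((i : ℕ) + 1)) * 2 = L * (L + 1) := by
  have hrange : ({i : Fin n | (i : ℕ) < L} : Finset (Fin n)).map Fin.valEmbedding =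
      Finset.range L := by
    ext k
    simp only [Finset.mem_map, Finset.mem_filter, Finset.mem_univ, true_and,
      Fin.valEmbedding_apply, Finset.mem_range]
    exact ⟨fun ⟨i, hi, hik⟩ => hik ▸ hi, fun hk => ⟨⟨k, by omega⟩, hk, rfl⟩⟩
  calc (∑ i ∈ ({i : Fin n | (i : ℕ) < L} : Finset (Fin n)), ((i : ℕ) + 1)) * 2
      = (∑ k ∈ Finset.range (L + 1), k) * 2 := by
        rw [Finset.sum_range_succ', ← hrange, Finset.sum_map, add_zero]
        rfl
    _ = L * (L + 1) := by rw [Finset.sum_range_id_mul_two, Nat.add_sub_cancel, mul_comm]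

theorem inEventA_iff {n : ℕ} (hn : n ≠ 0) (τ : Equiv.Perm (Fin n)) :
    inEventA n τ ↔ ∀ i ∈ ({i : Fin n | (i : ℕ) < ⌊Real.log n⌋₊} : Finset (Fin n)),
      τ i < τ ⟨n - 1, Nat.sub_one_lt hn⟩ := by
  simp only [Finset.mem_filter, Finset.mem_univ, true_and]
  refine ⟨fun h i hi => h i hi _ rfl, fun h i hi j hj => ?_⟩
  obtain rfl : j = ⟨n - 1, Nat.sub_one_lt hn⟩ := Fin.ext hj
  exact h i hi

theorem card_inEventA_div_factorial {n : ℕ} (hn : 3 ≤ n) :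
    ((Finset.univ.filter (inEventA n)).card : ℝ) / (n.factorial : ℝ)
      = 1 / ((⌊Real.log n⌋₊ : ℝ) + 1) := by
  have hLn : ⌊Real.log n⌋₊ < n := floor_log_natCast_lt (by omega)
  have hcount : (Finset.univ.filter (inEventA n)).card * (⌊Real.log n⌋₊ + 1) = n.factorial := by
    convert card_perm_forall_lt_mul ({i : Fin n | (i : ℕ) < ⌊Real.log n⌋₊} : Finset (Fin n))
      (a := ⟨n - 1, by omega⟩) (by simp; omega) using 3
    · ext τ
      simpa only [Finset.mem_filter, Finset.mem_univ, true_and] using inEventA_iff (by omega) τ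
    · rw [Fin.card_filter_val_lt, min_eq_right hLn.le]
    · rw [Fintype.card_fin]
  rw [div_eq_div_iff (by positivity) (by positivity), one_mul]
  exact_mod_cast hcount

theorem IsInverseUnfair.measure_inEventA {n : ℕ} {Ω : Type*} [MeasurableSpace Ω]
    {μ : Measure Ω} {Z : Fin n → Ω → ℝ} {ρ : Ω → Equiv.Perm (Fin n)}
    (hI : IsInverseUnfair μ Z ρ) (hn : 3 ≤ n) :
    μ {ω | inEventA n (ρ ω)} = ENNReal.ofReal ((n : ℝ)
      / ((n : ℝ) + (⌊Real.log n⌋₊ : ℝ) * ((⌊Real.log n⌋₊ : ℝ) + 1) / 2)) := by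
  have := hI.prob
  set L := ⌊Real.log n⌋₊
  have hL1 : 1 ≤ L := one_le_floor_log_natCast hn
  have hLn : L < n := floor_log_natCast_lt (by omega)
  let last : Fin n := ⟨n - 1, by omega⟩
  let S : Finset (Fin n) := {i | (i : ℕ) < L}
  have hS : S.Nonempty := ⟨⟨0, by omega⟩, by simp [S]; omega⟩
  have hlast : last ∉ S := by simp [S, last]; omega
  have hevent : {ω | inEventA n (ρ ω)} =ᵐ[μ] {ω | S.sup' hS Z ω < Z last ω} := by
    filter_upwards [hI.rank] with ω hω
    rw [eq_iff_iff]
    change inEventA n (ρ ω) ↔ S.sup' hS Z ω < Z last ω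
    rw [inEventA_iff (by omega), Finset.sup'_apply, Finset.sup'_lt_iff]
    exact forall₂_congr fun i _ => hω i last
  have hFW : ∀ t ∈ Icc (0 : ℝ) 1,
      μ {ω | S.sup' hS Z ω ≤ t} = ENNReal.ofReal (t ^ ∑ i ∈ S, ((i : ℕ) + 1)) := by
    intro t ht
    rw [hI.indep.measure_finsetSup'_le hS, Finset.prod_congr rfl fun i _ => hI.cdf i t ht,
      ← ENNReal.ofReal_prod_of_nonneg fun i _ => pow_nonneg ht.1 _, Finset.prod_pow_eq_pow_sum]
  have hFlast : ∀ t ∈ Icc (0 : ℝ) 1, μ {ω | Z last ω ≤ t} = ENNReal.ofReal (t ^ n) := by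
    intro t ht
    rw [hI.cdf last t ht, show (last : ℕ) + 1 = n by simp [last]; omega]
  rw [measure_congr hevent, measure_lt_eq_of_cdf_pow
    (Finset.measurable_sup' hS fun i _ => hI.meas i) (hI.meas last)
    (hI.indep.indepFun_finsetSup'_of_notMem hI.meas hS hlast)
    (Finset.sum_pos (fun i _ => Nat.succ_pos _) hS).ne' hFW hFlast]
  have hsum : ((∑ i ∈ S, ((i : ℕ) + 1) : ℕ) : ℝ) = L * (L + 1) / 2 := by
    have h2 : ((∑ i ∈ S, ((i : ℕ) + 1) : ℕ) : ℝ) * 2 = L * (L + 1) := by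
      exact_mod_cast Fin.sum_filter_val_lt_add_one_mul_two hLn.le
    linarith
  rw [hsum, add_comm]

theorem tendsto_triangle_floor_log_div_atTop :
    Tendsto (fun n : ℕ => (⌊Real.log n⌋₊ : ℝ) * ((⌊Real.log n⌋₊ : ℝ) + 1) / 2 / n)
      atTop (𝓝 0) := by
  have hlog : Tendsto (fun x : ℝ => Real.log x ^ 2 / (2 * x + 0) + Real.log x ^ 1 / (2 * x + 0))
      atTop (𝓝 0) := by
    simpa using (Real.tendsto_pow_log_div_mul_add_atTop 2 0 2 two_ne_zero).add
      (Real.tendsto_pow_log_div_mul_add_atTop 2 0 1 two_ne_zero)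
  refine squeeze_zero' (Eventually.of_forall fun n => by positivity) ?_
    (hlog.comp tendsto_natCast_atTop_atTop)
  filter_upwards [eventually_ge_atTop 1] with n hn
  have hn0 : (0 : ℝ) < n := by exact_mod_cast hn
  have hL0 : (0 : ℝ) ≤ ⌊Real.log n⌋₊ := Nat.cast_nonneg _
  have hLlog : (⌊Real.log n⌋₊ : ℝ) ≤ Real.log n := Nat.floor_le (Real.log_natCast_nonneg n)
  simp only [Function.comp_apply, add_zero, ← add_div, pow_one]
  rw [div_div, mul_comm 2]
  gcongr
  nlinarith

theorem tendsto_div_add_triangle_floor_log_sub_inv :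
    Tendsto (fun n : ℕ => (n : ℝ)
        / ((n : ℝ) + (⌊Real.log n⌋₊ : ℝ) * ((⌊Real.log n⌋₊ : ℝ) + 1) / 2)
      - 1 / ((⌊Real.log n⌋₊ : ℝ) + 1)) atTop (𝓝 1) := by
  have hL : Tendsto (fun n : ℕ => (⌊Real.log n⌋₊ : ℝ) + 1) atTop atTop :=
    tendsto_atTop_add_const_right _ 1 <| tendsto_natCast_atTop_atTop.comp <|
      tendsto_nat_floor_atTop.comp (Real.tendsto_log_atTop.comp tendsto_natCast_atTop_atTop)
  have hratio : Tendsto (fun n : ℕ =>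
      (1 + (⌊Real.log n⌋₊ : ℝ) * ((⌊Real.log n⌋₊ : ℝ) + 1) / 2 / n)⁻¹) atTop (𝓝 1) := by
    simpa using (tendsto_const_nhds.add tendsto_triangle_floor_log_div_atTop).inv₀
      (by norm_num : (1 : ℝ) + 0 ≠ 0)
  have hdiff := hratio.sub hL.inv_tendsto_atTop
  rw [sub_zero] at hdiff
  refine hdiff.congr' ?_
  filter_upwards [eventually_ge_atTop 1] with n hn
  have hn0 : (0 : ℝ) < n := by exact_mod_cast hn
  rw [Pi.inv_apply]
  field_simp

/-- For `n ≥ 3` and `L = ⌊log n⌋`, the set `A_n = {τ ∈ S_n : τ(i) < τ(n) for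
all 1 ≤ i ≤ L}` has uniform probability `1/(L+1)`, while
`P(ρ_n ∈ A_n) = n / (n + L(L+1)/2)`; consequently
`P(ρ_n ∈ A_n) - P(π_n ∈ A_n) → 1` as `n → ∞`. -/
theorem stmt_10 (Ω : ℕ → Type*) [∀ n, MeasurableSpace (Ω n)]
    (μ : ∀ n, Measure (Ω n)) (Z : ∀ n, Fin n → Ω n → ℝ)
    (ρ : ∀ n, Ω n → Equiv.Perm (Fin n))
    (h : ∀ n, IsInverseUnfair (μ n) (Z n) (ρ n)) :
    (∀ n, 3 ≤ n →
      (((Finset.univ.filter (inEventA n)).card : ℝ) / (Nat.factorial n : ℝ)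
          = 1 / ((⌊Real.log n⌋₊ : ℝ) + 1)) ∧
      μ n {ω | inEventA n (ρ n ω)}
          = ENNReal.ofReal ((n : ℝ)
              / ((n : ℝ) + (⌊Real.log n⌋₊ : ℝ) * ((⌊Real.log n⌋₊ : ℝ) + 1) / 2))) ∧
    Tendsto (fun n =>
        (μ n {ω | inEventA n (ρ n ω)}).toReal
          - ((Finset.univ.filter (inEventA n)).card : ℝ) / (Nat.factorial n : ℝ))
      atTop (𝓝 1) := by
  refine ⟨fun n hn => ⟨card_inEventA_div_factorial hn, (h n).measure_inEventA hn⟩,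
    tendsto_div_add_triangle_floor_log_sub_inv.congr' ?_⟩
  filter_upwards [eventually_ge_atTop 3] with n hn
  rw [(h n).measure_inEventA hn, card_inEventA_div_factorial hn,
    ENNReal.toReal_ofReal (by positivity)]
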